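/- arXiv:1912.12605 — 4 statements merged into one kernel-verified Lean document; each statement's English description precedes it below -/
import Mathlib

section
/- Let G be a finite simple graph and n a positive integer. Then f_G(n) ≤ C(I_n(G)) + 1; that is, every collection of C(I_n(G)) + 1 independent sets of size n in G has a rainbow independent set of size n. -/
/-!
Follow a `d`-collapse of `X` backwards from the void complex, keeping a rainbow non-face of
`X` for `d + 1` given non-faces. When the collapse of a free face `σ ⊆ τ` is undone, the current
rainbow set either stays a non-face, or lies in `[σ, τ]`; then `σ` uses at most `d` colours, and a
non-face of an unused colour is not inside `τ`, so `σ` plus one of its vertices outside `τ` is a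
rainbow non-face. For `X = I_n(G)` a non-face contains an independent `n`-set, which is rainbow.
-/

namespace PaperKL

open Finset

variable {V : Type*}

section Complexes
variable [DecidableEq V]

/-- A (finite) abstract simplicial complex: a family of finite sets closed under
taking subsets. -/
def IsSimplicialComplex (X : Finset (Finset V)) : Prop :=
  ∀ σ ∈ X, ∀ τ ⊆ σ, τ ∈ X

/-- `σ` is a free face of `X`, with `τ` the unique maximal face of `X` containing it:
equivalently, every face of `X` containing `σ` is contained in `τ`. -/
def IsFreeFace (X : Finset (Finset V)) (σ τ : Finset V) : Prop :=
  σ ∈ X ∧ τ ∈ X ∧ σ ⊆ τ ∧ ∀ η ∈ X, σ ⊆ η → η ⊆ τ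

/-- `Y` is obtained from `X` by an elementary `d`-collapse. -/
def ElemCollapse (d : ℕ) (X Y : Finset (Finset V)) : Prop :=
  ∃ σ τ : Finset V, IsFreeFace X σ τ ∧ σ.card ≤ d ∧
    Y = X.filter fun η => ¬(σ ⊆ η ∧ η ⊆ τ)

/-- `X` is `d`-collapsible: some sequence of elementary `d`-collapses reduces `X`
to the void complex `∅`. -/
def Collapsible (d : ℕ) (X : Finset (Finset V)) : Prop :=
  Relation.ReflTransGen (ElemCollapse d) X ∅

/-- The collapsibility number `C(X)`: the minimum `d` such that `X` is `d`-collapsible. -/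
noncomputable def collapseNum (X : Finset (Finset V)) : ℕ :=
  sInf {d | Collapsible d X}

/-- The link `lk(X, τ) = {η ∈ X : η ∩ τ = ∅, η ∪ τ ∈ X}`. -/
def link (X : Finset (Finset V)) (τ : Finset V) : Finset (Finset V) :=
  X.filter fun η => η ∩ τ = ∅ ∧ η ∪ τ ∈ X

/-- Deletion of a vertex: `X \ v`. -/
def deleteVert (X : Finset (Finset V)) (v : V) : Finset (Finset V) :=
  X.filter fun σ => v ∉ σ

/-- The induced subcomplex on the complement of `S`: `X[V \ S]`. -/
def deleteSet (X : Finset (Finset V)) (S : Finset V) : Finset (Finset V) :=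
  X.filter fun σ => σ ∩ S = ∅

/-- The vertex set of a complex: the union of its faces. -/
def vertexSet (X : Finset (Finset V)) : Finset V := X.sup id

/-- The join `X ∗ Y = {σ ∪ τ : σ ∈ X, τ ∈ Y}`. -/
def joinSC (X Y : Finset (Finset V)) : Finset (Finset V) :=
  (X ×ˢ Y).image fun p => p.1 ∪ p.2

/-- `τ` is a maximal face of `X`. -/
def IsMaximalFace (X : Finset (Finset V)) (τ : Finset V) : Prop :=
  τ ∈ X ∧ ∀ η ∈ X, τ ⊆ η → η = τ

/-- `X` is a cone over `v`: every maximal face of `X` contains `v`. -/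
def IsConeOver (X : Finset (Finset V)) (v : V) : Prop :=
  ∀ τ, IsMaximalFace X τ → v ∈ τ

/-- A missing face of `X`: a subset of the vertex set which is not a face,
all of whose proper subsets are faces. -/
def IsMissingFace (X : Finset (Finset V)) (τ : Finset V) : Prop :=
  τ ⊆ vertexSet X ∧ τ ∉ X ∧ ∀ σ ⊂ τ, σ ∈ X

end Complexes

/-- A finset is an independent set in the graph `G`. -/
def IsIndepSet (G : SimpleGraph V) (s : Finset V) : Prop :=
  ∀ u ∈ s, ∀ v ∈ s, ¬ G.Adj u v

section Graphs
variable [DecidableEq V]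

/-- The complex `I_n(G[W])` of the induced subgraph `G[W]`, realized as the family of
subsets `U ⊆ W` such that `U` contains no independent set of `G` of size `n`. -/
noncomputable def indComplexOn (G : SimpleGraph V) (W : Finset V) (n : ℕ) :
    Finset (Finset V) :=
  @Finset.filter _ (fun U => ¬ ∃ I ⊆ U, I.card = n ∧ IsIndepSet G I)
    (Classical.decPred _) W.powerset

variable [Fintype V]

/-- The complex `I_n(G)`: subsets of `V` containing no independent set of size `n`. -/
noncomputable def indComplex (G : SimpleGraph V) (n : ℕ) : Finset (Finset V) :=
  indComplexOn G Finset.univ n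

/-- The open neighborhood of `v` as a finset. -/
noncomputable def nbrsFinset (G : SimpleGraph V) (v : V) : Finset V :=
  @Finset.filter _ (fun u => G.Adj v u) (Classical.decPred _) Finset.univ

/-- Filter of a finset by an arbitrary predicate (classical decidability). -/
noncomputable def cfilter (p : V → Prop) (s : Finset V) : Finset V :=
  @Finset.filter _ p (Classical.decPred _) s

end Graphs

/-- `G` has maximum degree at most `Δ`. -/
def MaxDegLE (G : SimpleGraph V) (Δ : ℕ) : Prop :=
  ∀ v : V, (G.neighborSet v).ncard ≤ Δ

/-- `G` is claw-free: it has no induced subgraph isomorphic to `K_{1,3}`. -/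
def ClawFree (G : SimpleGraph V) : Prop :=
  ¬ ∃ a b c d : V, b ≠ c ∧ b ≠ d ∧ c ≠ d ∧
    G.Adj a b ∧ G.Adj a c ∧ G.Adj a d ∧ ¬G.Adj b c ∧ ¬G.Adj b d ∧ ¬G.Adj c d

/-- `G` is chordal: it has no induced cycle of length at least 4. -/
def IsChordal (G : SimpleGraph V) : Prop :=
  ∀ m : ℕ, 4 ≤ m → ¬ ∃ f : ZMod m → V, Function.Injective f ∧
    ∀ i j : ZMod m, G.Adj (f i) (f j) ↔ (j = i + 1 ∨ i = j + 1)

/-- `v` is a simplicial vertex of `G`: its closed neighborhood is a clique. -/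
def IsSimplicialVertex (G : SimpleGraph V) (v : V) : Prop :=
  ∀ a b : V, G.Adj v a → G.Adj v b → a ≠ b → G.Adj a b

/-- The connected component of `v` in `G` is a path: its vertices can be enumerated
as `f 0, …, f m` with adjacency exactly between consecutive vertices. -/
def InPathComponent (G : SimpleGraph V) (v : V) : Prop :=
  ∃ (m : ℕ) (f : Fin (m + 1) → V), Function.Injective f ∧
    (∀ w, G.Reachable v w ↔ ∃ i, f i = w) ∧
    (∀ i j : Fin (m + 1), G.Adj (f i) (f j) ↔ ((i : ℕ) + 1 = (j : ℕ) ∨ (j : ℕ) + 1 = (i : ℕ)))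

/-- The collection `A 0, …, A (t-1)` of independent sets of `G` admits a rainbow
independent set of size `n`: there are indices `g 0 < ⋯ < g (n-1)` and distinct
vertices `a j ∈ A (g j)` forming an independent set of `G`. -/
def HasRainbowIndepSet [DecidableEq V] (G : SimpleGraph V) (n : ℕ) {t : ℕ} (A : Fin t → Finset V) : Prop :=
  ∃ (g : Fin n → Fin t) (a : Fin n → V), StrictMono g ∧ Function.Injective a ∧
    (∀ j, a j ∈ A (g j)) ∧ IsIndepSet G (Finset.image a Finset.univ)

section FGraphs
variable [DecidableEq V] [Fintype V]

/-- `f_G(n)`: the minimum `t` such that every collection of `t` independent sets of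
size `n` in `G` has a rainbow independent set of size `n`. -/
noncomputable def fRainbow (G : SimpleGraph V) (n : ℕ) : ℕ :=
  sInf {t | ∀ A : Fin t → Finset V,
    (∀ i, IsIndepSet G (A i) ∧ (A i).card = n) → HasRainbowIndepSet G n A}

/-- The independence number `α(G)`. -/
noncomputable def indepNum (G : SimpleGraph V) : ℕ :=
  (@Finset.filter _ (fun s => IsIndepSet G s) (Classical.decPred _)
    (Finset.univ : Finset V).powerset).sup Finset.card

end FGraphs


section Rainbow
variable {ι : Type*}

def IsRainbow (A : ι → Finset V) (S : Finset V) : Prop :=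
  ∃ f : V → ι, Set.InjOn f S ∧ ∀ x ∈ S, x ∈ A (f x)

theorem IsRainbow.mono {A : ι → Finset V} {S T : Finset V} (hS : IsRainbow A S) (hTS : T ⊆ S) :
    IsRainbow A T :=
  let ⟨f, hinj, hmem⟩ := hS
  ⟨f, hinj.mono (by exact_mod_cast hTS), fun x hx => hmem x (hTS hx)⟩

theorem IsRainbow.exists_insert_notMem [DecidableEq V] [Fintype ι] {A : ι → Finset V}
    {S τ : Finset V} (hS : IsRainbow A S) (hcard : S.card < Fintype.card ι) (hSτ : S ⊆ τ)
    (hA : ∀ i, ¬A i ⊆ τ) : ∃ b ∉ τ, IsRainbow A (insert b S) := by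
  classical
  obtain ⟨f, hinj, hmem⟩ := hS
  obtain ⟨i, -, hi⟩ : ∃ i ∈ univ, i ∉ S.image f :=
    exists_mem_notMem_of_card_lt_card (card_image_le.trans_lt hcard)
  obtain ⟨b, hbA, hbτ⟩ := not_subset.mp (hA i)
  have hbS : b ∉ S := fun h => hbτ (hSτ h)
  have hupdate : ∀ x ∈ S, Function.update f b i x = f x := fun x hx =>
    Function.update_of_ne (ne_of_mem_of_not_mem hx hbS) _ _
  refine ⟨b, hbτ, Function.update f b i, ?_, ?_⟩
  · rw [coe_insert, Set.injOn_insert (by exact_mod_cast hbS), Function.update_self]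
    refine ⟨hinj.congr fun x hx => (hupdate x hx).symm, ?_⟩
    rintro ⟨x, hx, hfx⟩
    exact hi (mem_image.mpr ⟨x, hx, (hupdate x hx).symm.trans hfx⟩)
  · intro x hx
    rcases mem_insert.mp hx with rfl | hx
    · simpa using hbA
    · simpa [hupdate x hx] using hmem x hx

end Rainbow

section Collapse
variable [DecidableEq V]

theorem ElemCollapse.subset {d : ℕ} {X Y : Finset (Finset V)} (h : ElemCollapse d X Y) :
    Y ⊆ X := by
  obtain ⟨σ, τ, -, -, rfl⟩ := h
  exact filter_subset _ _

theorem ElemCollapse.isSimplicialComplex {d : ℕ} {X Y : Finset (Finset V)}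
    (h : ElemCollapse d X Y) (hX : IsSimplicialComplex X) : IsSimplicialComplex Y := by
  obtain ⟨σ, τ, hfree, -, rfl⟩ := h
  intro η hη ρ hρ
  rw [mem_filter] at hη ⊢
  refine ⟨hX η hη.1 ρ hρ, fun ⟨hσρ, _⟩ => hη.2 ⟨hσρ.trans hρ, ?_⟩⟩
  exact hfree.2.2.2 η hη.1 (hσρ.trans hρ)

theorem elemCollapse_erase_of_maximal {d : ℕ} {X : Finset (Finset V)} {τ : Finset V}
    (hτ : Maximal (· ∈ X) τ) (hd : τ.card ≤ d) : ElemCollapse d X (X.erase τ) := by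
  refine ⟨τ, τ, ⟨hτ.1, hτ.1, subset_rfl, fun η hη hτη => hτ.2 hη hτη⟩, hd, ?_⟩
  ext η
  simp [← subset_antisymm_iff, eq_comm, and_comm]

theorem collapsible_card [Fintype V] (X : Finset (Finset V)) : Collapsible (Fintype.card V) X := by
  induction X using Finset.strongInduction with
  | H X ih =>
    obtain rfl | hne := X.eq_empty_or_nonempty
    · exact Relation.ReflTransGen.refl
    obtain ⟨τ, hτ⟩ := X.exists_maximal hne
    exact .head (elemCollapse_erase_of_maximal hτ (card_le_univ τ))
      (ih _ (erase_ssubset hτ.1))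

theorem collapsible_collapseNum [Fintype V] (X : Finset (Finset V)) :
    Collapsible (collapseNum X) X :=
  Nat.sInf_mem (s := {d | Collapsible d X}) ⟨_, collapsible_card X⟩

variable {ι : Type*} [Fintype ι]

theorem ElemCollapse.exists_isRainbow_notMem {d : ℕ} {X Y : Finset (Finset V)}
    (h : ElemCollapse d X Y) (hX : IsSimplicialComplex X) (hd : d < Fintype.card ι)
    {A : ι → Finset V} (hA : ∀ i, A i ∉ X) {S : Finset V} (hSY : S ∉ Y) (hS : IsRainbow A S) :
    ∃ S ∉ X, IsRainbow A S := by
  by_cases hSX : S ∉ X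
  · exact ⟨S, hSX, hS⟩
  obtain ⟨σ, τ, ⟨-, hτ, -, hτmax⟩, hσ, rfl⟩ := h
  obtain ⟨hσS, hSτ⟩ : σ ⊆ S ∧ S ⊆ τ := by
    simpa [mem_filter, not_not.mp hSX] using hSY
  obtain ⟨b, hbτ, hb⟩ := (hS.mono hσS).exists_insert_notMem (hσ.trans_lt hd) (hσS.trans hSτ)
    fun i hi => hA i (hX τ hτ _ hi)
  exact ⟨insert b σ, fun hbσ => hbτ (hτmax _ hbσ (subset_insert b σ) (mem_insert_self b σ)), hb⟩

theorem Collapsible.exists_isRainbow_notMem {d : ℕ} {X : Finset (Finset V)}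
    (hcol : Collapsible d X) (hX : IsSimplicialComplex X) (hd : d < Fintype.card ι)
    (A : ι → Finset V) (hA : ∀ i, A i ∉ X) : ∃ S ∉ X, IsRainbow A S := by
  induction hcol using Relation.ReflTransGen.head_induction_on with
  | refl =>
    have : Nonempty ι := Fintype.card_pos_iff.mp (by omega)
    exact ⟨∅, notMem_empty ∅, fun _ => Classical.arbitrary ι, by simp, by simp⟩
  | head hXY _ ih =>
    obtain ⟨S, hSY, hS⟩ := ih (hXY.isSimplicialComplex hX) fun i hi => hA i (hXY.subset hi)
    exact hXY.exists_isRainbow_notMem hX hd hA hSY hS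

end Collapse

section Graphs
variable [Fintype V]

theorem mem_indComplex {G : SimpleGraph V} {n : ℕ} {U : Finset V} :
    U ∈ indComplex G n ↔ ¬∃ I ⊆ U, I.card = n ∧ IsIndepSet G I := by
  simp [indComplex, indComplexOn]

theorem isSimplicialComplex_indComplex (G : SimpleGraph V) (n : ℕ) :
    IsSimplicialComplex (indComplex G n) := by
  intro σ hσ τ hτ
  rw [mem_indComplex] at hσ ⊢
  exact fun ⟨I, hIτ, hI⟩ => hσ ⟨I, hIτ.trans hτ, hI⟩

end Graphs

theorem IsRainbow.hasRainbowIndepSet [DecidableEq V] {G : SimpleGraph V} {n t : ℕ}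
    {A : Fin t → Finset V} {I : Finset V} (hI : IsRainbow A I) (hcard : I.card = n)
    (hindep : IsIndepSet G I) : HasRainbowIndepSet G n A := by
  obtain ⟨f, hinj, hmem⟩ := hI
  let e := (I.image f).orderIsoOfFin ((card_image_of_injOn hinj).trans hcard)
  have : ∀ j, ∃ x ∈ I, f x = e j := fun j => mem_image.mp (e j).2
  choose a haI hfa using this
  refine ⟨fun j => e j, a, fun i j hij => e.strictMono hij, fun i j hij => ?_, fun j => ?_, ?_⟩
  · exact e.injective (Subtype.ext ((hfa i).symm.trans ((congrArg f hij).trans (hfa j))))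
  · simpa [hfa j] using hmem _ (haI j)
  · have hsub : image a univ ⊆ I := image_subset_iff.mpr fun j _ => haI j
    exact fun u hu v hv => hindep u (hsub hu) v (hsub hv)

theorem rainbow_le_collapseNum_add_one_general {V : Type*} [DecidableEq V] [Fintype V]
    (G : SimpleGraph V) (n : ℕ)
    (A : Fin (collapseNum (indComplex G n) + 1) → Finset V)
    (hA : ∀ i, IsIndepSet G (A i) ∧ (A i).card = n) :
    HasRainbowIndepSet G n A := by
  have hnonface : ∀ i, A i ∉ indComplex G n := fun i hi =>
    mem_indComplex.mp hi ⟨A i, subset_rfl, (hA i).2, (hA i).1⟩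
  obtain ⟨S, hS, hrainbow⟩ := (collapsible_collapseNum _).exists_isRainbow_notMem
    (isSimplicialComplex_indComplex G n) (by simp) A hnonface
  obtain ⟨I, hIS, hIcard, hIindep⟩ := not_not.mp (mem_indComplex.not.mp hS)
  exact (hrainbow.mono hIS).hasRainbowIndepSet hIcard hIindep

/-- `f_G(n) ≤ C(I_n(G)) + 1`: every collection of
`C(I_n(G)) + 1` independent sets of size `n` in `G` has a rainbow independent
set of size `n`. -/
theorem rainbow_le_collapseNum_add_one {V : Type*} [DecidableEq V] [Fintype V]
    (G : SimpleGraph V) (n : ℕ) (hn : 1 ≤ n)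
    (A : Fin (collapseNum (indComplex G n) + 1) → Finset V)
    (hA : ∀ i, IsIndepSet G (A i) ∧ (A i).card = n) :
    HasRainbowIndepSet G n A :=
  rainbow_le_collapseNum_add_one_general G n A hA

end PaperKL
end

section
/- Let G = (V,E) be a finite simple graph with maximum degree at most Δ. Then C(I_2(G)) ≤ ⌈(Δ + 1)/2⌉. -/
namespace PaperKL

open Finset

variable {V : Type*}

/-!
Collapsing the cone `v ∗ lk(X, v)` inside `X` lifts every `d`-collapse of the link to a
`(d+1)`-collapse and leaves `X \ v`; hence `X` is `(d+1)`-collapsible as soon as `lk(X, v)` is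
`d`-collapsible and `X \ v` is `(d+1)`-collapsible. In a clique complex the link of `v` is the
clique complex on the neighbourhood of `v`, and a clique complex on `m` vertices is
`⌊m/2⌋`-collapsible: either it is a simplex, or it has two non-adjacent vertices `a, b`, and then
the link of `a` lives on at most `m - 2` vertices while `X \ a` lives on `m - 1`. Deleting the
vertices one at a time, each link lives on at most `Δ` vertices, which gives
`⌊Δ/2⌋ + 1 = ⌈(Δ+1)/2⌉`.
-/

section Collapsibility

variable [DecidableEq V]

theorem Collapsible.mono {d e : ℕ} (h : d ≤ e) {X : Finset (Finset V)} (hX : Collapsible d X) :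
    Collapsible e X :=
  Relation.ReflTransGen.mono (fun _ _ ⟨σ, τ, hf, hc, hY⟩ => ⟨σ, τ, hf, hc.trans h, hY⟩) _ _ hX

theorem collapsible_of_forall_subset {X : Finset (Finset V)} {τ : Finset V} (h₀ : ∅ ∈ X)
    (hτ : τ ∈ X) (h : ∀ η ∈ X, η ⊆ τ) (d : ℕ) : Collapsible d X :=
  .single ⟨∅, τ, ⟨h₀, hτ, empty_subset _, fun η hη _ => h η hη⟩, by simp,
    (filter_false_of_mem fun η hη => by simp [h η hη]).symm⟩

section Cone

variable {u : V} {B L : Finset (Finset V)}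

theorem elemCollapse_union_image_insert (hB : ∀ η ∈ B, u ∉ η) (hL : ∀ η ∈ L, u ∉ η) {d : ℕ}
    {L' : Finset (Finset V)} (h : ElemCollapse d L L') :
    ElemCollapse (d + 1) (B ∪ L.image (insert u)) (B ∪ L'.image (insert u)) := by
  obtain ⟨σ, τ, ⟨hσ, hτ, hστ, hmax⟩, hcard, rfl⟩ := h
  refine ⟨insert u σ, insert u τ, ⟨mem_union_right _ (mem_image_of_mem _ hσ),
    mem_union_right _ (mem_image_of_mem _ hτ), insert_subset_insert _ hστ, ?_⟩,
    (card_insert_le _ _).trans (by omega), ?_⟩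
  · intro η hη hση
    rcases mem_union.1 hη with hη | hη
    · exact absurd (hση (mem_insert_self u σ)) (hB η hη)
    · obtain ⟨η₀, hη₀, rfl⟩ := mem_image.1 hη
      rw [insert_subset_insert_iff (hL σ hσ)] at hση
      exact insert_subset_insert _ (hmax η₀ hη₀ hση)
  · have hBkeep : B.filter (fun η => ¬(insert u σ ⊆ η ∧ η ⊆ insert u τ)) = B :=
      filter_true_of_mem fun η hη h => hB η hη (h.1 (mem_insert_self u σ))
    rw [filter_union, hBkeep, filter_image]
    congr 2
    refine filter_congr fun η hη => ?_
    rw [insert_subset_insert_iff (hL σ hσ), insert_subset_insert_iff (hL η hη)]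

theorem collapse_union_image_insert (hB : ∀ η ∈ B, u ∉ η) {d : ℕ} (hL : Collapsible d L)
    (huL : ∀ η ∈ L, u ∉ η) :
    Relation.ReflTransGen (ElemCollapse (d + 1)) (B ∪ L.image (insert u)) B := by
  induction hL using Relation.ReflTransGen.head_induction_on with
  | refl => simpa using .refl
  | head hstep _ ih =>
    exact .head (elemCollapse_union_image_insert hB huL hstep)
      (ih fun η hη => huL η (hstep.subset hη))

end Cone

theorem mem_link_singleton {X : Finset (Finset V)} {u : V} {η : Finset V} :
    η ∈ link X {u} ↔ η ∈ X ∧ u ∉ η ∧ insert u η ∈ X := by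
  rw [link, mem_filter, ← disjoint_iff_inter_eq_empty, disjoint_singleton_right, union_singleton]

theorem eq_deleteVert_union_image_link {X : Finset (Finset V)} (hX : IsSimplicialComplex X)
    (u : V) : X = deleteVert X u ∪ (link X {u}).image (insert u) := by
  ext η
  simp only [deleteVert, mem_union, mem_filter, mem_image, mem_link_singleton]
  constructor
  · intro hη
    by_cases hu : u ∈ η
    · exact .inr ⟨η.erase u, ⟨hX η hη _ (erase_subset u η), notMem_erase u η,
        (insert_erase hu).symm ▸ hη⟩, insert_erase hu⟩
    · exact .inl ⟨hη, hu⟩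
  · rintro (⟨hη, -⟩ | ⟨η, ⟨-, -, hη⟩, rfl⟩) <;> exact hη

theorem collapsible_succ_of_link_of_deleteVert {X : Finset (Finset V)}
    (hX : IsSimplicialComplex X) (u : V) {d : ℕ} (hlink : Collapsible d (link X {u}))
    (hdel : Collapsible (d + 1) (deleteVert X u)) : Collapsible (d + 1) X := by
  rw [eq_deleteVert_union_image_link hX u]
  exact (collapse_union_image_insert (fun η hη => (mem_filter.1 hη).2) hlink
    fun _ hη => (mem_link_singleton.1 hη).2.1).trans hdel

end Collapsibility

section CliqueComplex

variable (G : SimpleGraph V)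

theorem mem_cfilter {p : V → Prop} {s : Finset V} {a : V} : a ∈ cfilter p s ↔ a ∈ s ∧ p a :=
  @mem_filter _ p (Classical.decPred p) s a

theorem card_cfilter_adj_le [Finite V] {Δ : ℕ} (hΔ : MaxDegLE G Δ) (u : V) (W : Finset V) :
    #(cfilter (G.Adj u) W) ≤ Δ :=
  calc #(cfilter (G.Adj u) W) = (cfilter (G.Adj u) W : Set V).ncard := (Set.ncard_coe_finset _).symm
    _ ≤ (G.neighborSet u).ncard := Set.ncard_le_ncard fun _ hx => (mem_cfilter.1 hx).2
    _ ≤ Δ := hΔ u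

variable [DecidableEq V]

theorem isIndepSet_pair {a b : V} : IsIndepSet G {a, b} ↔ ¬G.Adj a b := by
  simp [IsIndepSet, G.adj_comm b a]

theorem mem_indComplexOn_two {W U : Finset V} :
    U ∈ indComplexOn G W 2 ↔ U ⊆ W ∧ G.IsClique (U : Set V) := by
  rw [indComplexOn, @mem_filter _ _ (Classical.decPred _), mem_powerset]
  refine and_congr_right fun _ => ?_
  simp only [card_eq_two, SimpleGraph.isClique_iff, Set.Pairwise, mem_coe]
  constructor
  · intro h a ha b hb hab
    by_contra hadj
    exact h ⟨{a, b}, insert_subset ha (singleton_subset_iff.2 hb), ⟨a, b, hab, rfl⟩,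
      (isIndepSet_pair G).2 hadj⟩
  · rintro h ⟨_, hI, ⟨a, b, hab, rfl⟩, hind⟩
    exact (isIndepSet_pair G).1 hind (h (hI (mem_insert_self a _)) (hI (by simp)) hab)

theorem indComplexOn_two_isSimplicialComplex (W : Finset V) :
    IsSimplicialComplex (indComplexOn G W 2) := by
  intro σ hσ τ hτσ
  rw [mem_indComplexOn_two] at hσ ⊢
  exact ⟨hτσ.trans hσ.1, hσ.2.subset (coe_subset.2 hτσ)⟩

theorem link_indComplexOn_two {W : Finset V} {u : V} (hu : u ∈ W) :
    link (indComplexOn G W 2) {u} = indComplexOn G (cfilter (G.Adj u) W) 2 := by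
  ext η
  simp only [mem_link_singleton, mem_indComplexOn_two, coe_insert, SimpleGraph.isClique_insert,
    subset_iff, mem_insert, forall_eq_or_imp, mem_cfilter, mem_coe]
  constructor
  · rintro ⟨⟨hηW, hη⟩, huη, -, -, hadj⟩
    exact ⟨fun x hx => ⟨hηW hx, hadj x hx fun hux => huη (hux ▸ hx)⟩, hη⟩
  · rintro ⟨hηW, hη⟩
    exact ⟨⟨fun x hx => (hηW hx).1, hη⟩, fun huη => G.irrefl (hηW huη).2,
      ⟨hu, fun x hx => (hηW hx).1⟩, hη, fun x hx _ => (hηW hx).2⟩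

theorem deleteVert_indComplexOn_two (W : Finset V) (u : V) :
    deleteVert (indComplexOn G W 2) u = indComplexOn G (W.erase u) 2 := by
  ext η
  simp only [deleteVert, mem_filter, mem_indComplexOn_two, subset_erase]
  exact and_right_comm

theorem collapsible_indComplexOn_two_of_isClique {W : Finset V} (hW : G.IsClique (W : Set V))
    (d : ℕ) : Collapsible d (indComplexOn G W 2) :=
  collapsible_of_forall_subset ((mem_indComplexOn_two G).2 ⟨empty_subset W, by simp⟩)
    ((mem_indComplexOn_two G).2 ⟨subset_rfl, hW⟩) (fun _ hη => ((mem_indComplexOn_two G).1 hη).1) d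

theorem cfilter_adj_subset_erase_erase {W : Finset V} {a b : V} (hab : ¬G.Adj a b) :
    cfilter (G.Adj a) W ⊆ (W.erase b).erase a := fun x hx => by
  obtain ⟨hxW, hax⟩ := mem_cfilter.1 hx
  exact mem_erase.2 ⟨(G.ne_of_adj hax).symm, mem_erase.2 ⟨fun hxb => hab (hxb ▸ hax), hxW⟩⟩

theorem collapsible_indComplexOn_two_card_div_two (W : Finset V) :
    Collapsible (#W / 2) (indComplexOn G W 2) := by
  induction W using Finset.strongInduction with
  | H W ih =>
  by_cases hW : G.IsClique (W : Set V)
  · exact collapsible_indComplexOn_two_of_isClique G hW _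
  obtain ⟨a, ha, b, hb, hne, hab⟩ : ∃ a ∈ W, ∃ b ∈ W, a ≠ b ∧ ¬G.Adj a b := by
    simpa [SimpleGraph.isClique_iff, Set.Pairwise] using hW
  have hsub := cfilter_adj_subset_erase_erase G (W := W) hab
  have hcard : #(cfilter (G.Adj a) W) + 2 ≤ #W := by
    have h := card_le_card hsub
    rw [card_erase_of_mem (mem_erase.2 ⟨hne, ha⟩), card_erase_of_mem hb] at h
    have := one_lt_card.2 ⟨a, ha, b, hb, hne⟩
    omega
  obtain ⟨d, hd⟩ : ∃ d, #W / 2 = d + 1 := ⟨#W / 2 - 1, by omega⟩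
  rw [hd]
  refine collapsible_succ_of_link_of_deleteVert (indComplexOn_two_isSimplicialComplex G W) a ?_ ?_
  · rw [link_indComplexOn_two G ha]
    exact (ih _ (hsub.trans_ssubset ((erase_subset a _).trans_ssubset (erase_ssubset hb)))).mono
      (by omega)
  · rw [deleteVert_indComplexOn_two]
    exact (ih _ (erase_ssubset ha)).mono (by rw [card_erase_of_mem ha]; omega)

theorem collapsible_indComplexOn_two_of_maxDegLE [Finite V] {Δ : ℕ} (hΔ : MaxDegLE G Δ)
    (W : Finset V) : Collapsible (Δ / 2 + 1) (indComplexOn G W 2) := by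
  induction W using Finset.strongInduction with
  | H W ih =>
  obtain rfl | ⟨u, hu⟩ := W.eq_empty_or_nonempty
  · exact collapsible_indComplexOn_two_of_isClique G (by simp) _
  refine collapsible_succ_of_link_of_deleteVert (indComplexOn_two_isSimplicialComplex G W) u ?_ ?_
  · rw [link_indComplexOn_two G hu]
    exact (collapsible_indComplexOn_two_card_div_two G _).mono
      (Nat.div_le_div_right (card_cfilter_adj_le G hΔ u W))
  · rw [deleteVert_indComplexOn_two]
    exact ih _ (erase_ssubset hu)

end CliqueComplex

/-- If `G` has maximum degree at most `Δ` then
`C(I_2(G)) ≤ ⌈(Δ + 1) / 2⌉`. -/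
theorem collapseNum_indComplex_two_le {V : Type*} [DecidableEq V] [Fintype V]
    (G : SimpleGraph V) (Δ : ℕ) (hΔ : MaxDegLE G Δ) :
    collapseNum (indComplex G 2) ≤ (Δ + 1 + 1) / 2 := by
  rw [show (Δ + 1 + 1) / 2 = Δ / 2 + 1 by omega]
  exact Nat.sInf_le (collapsible_indComplexOn_two_of_maxDegLE G hΔ univ)

end PaperKL
end

section
/- Let U and V be two disjoint finite sets, and let X be a simplicial complex on vertex set V. Then C(X ∗ 2^U) = C(X), where 2^U is the complete complex on U and ∗ denotes the join. -/
namespace PaperKL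

open Finset

variable {V : Type*}

/-!
A collapse sequence of `X` lifts to `X ∗ 2^U`: each free pair `(σ, τ)` becomes the free pair
`(σ, τ ∪ U)` of the join. Conversely, the faces of `X ∗ 2^U` avoiding `U` form `X`, and an
elementary collapse `(σ, τ)` of a complex restricts to the faces avoiding `U` either trivially
(when `σ` meets `U`) or as the collapse of `(σ, τ \ U)`. Neither direction changes `|σ|`.
-/

theorem _root_.Relation.ReflTransGen.lift_of_invariant {α β : Type*} {r : α → α → Prop}
    {p : β → β → Prop} {P : α → Prop} (f : α → β) (hP : ∀ a b, r a b → P a → P b)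
    (h : ∀ a b, r a b → P a → Relation.ReflTransGen p (f a) (f b)) {a b : α}
    (hab : Relation.ReflTransGen r a b) (ha : P a) : Relation.ReflTransGen p (f a) (f b) := by
  induction hab using Relation.ReflTransGen.head_induction_on with
  | refl => exact .refl
  | head hac _ ih => exact (h _ _ hac ha).trans (ih (hP _ _ hac ha))

section Collapses

variable {W : Type*}

theorem isSimplicialComplex_powerset (U : Finset W) : IsSimplicialComplex U.powerset :=
  fun _ hσ _ hτ => mem_powerset.mpr (hτ.trans (mem_powerset.mp hσ))

variable [DecidableEq W] {d : ℕ} {U : Finset W} {X Y Z Z' : Finset (Finset W)}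

theorem IsSimplicialComplex.joinSC (hX : IsSimplicialComplex X) (hY : IsSimplicialComplex Y) :
    IsSimplicialComplex (joinSC X Y) := by
  intro ξ hξ ζ hζ
  simp only [PaperKL.joinSC, mem_image, mem_product, Prod.exists] at hξ ⊢
  obtain ⟨σ, τ, ⟨hσ, hτ⟩, rfl⟩ := hξ
  exact ⟨ζ ∩ σ, ζ \ σ, ⟨hX σ hσ _ inter_subset_right, hY τ hτ _ (sdiff_le_iff.mpr hζ)⟩,
    sup_inf_sdiff ζ σ⟩

theorem ElemCollapse.subset_s6 (h : ElemCollapse d Z Z') : Z' ⊆ Z := by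
  obtain ⟨σ, τ, -, -, rfl⟩ := h
  exact filter_subset _ _

theorem IsSimplicialComplex.of_elemCollapse (hZ : IsSimplicialComplex Z)
    (h : ElemCollapse d Z Z') : IsSimplicialComplex Z' := by
  obtain ⟨σ, τ, ⟨-, -, -, hmax⟩, -, rfl⟩ := h
  simp only [IsSimplicialComplex, mem_filter]
  rintro η ⟨hη, hηστ⟩ ζ hζ
  exact ⟨hZ η hη ζ hζ, fun ⟨hσζ, _⟩ => hηστ ⟨hσζ.trans hζ, hmax η hη (hσζ.trans hζ)⟩⟩

theorem mem_joinSC_powerset (hZU : ∀ η ∈ Z, Disjoint η U) {ζ : Finset W} :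
    ζ ∈ joinSC Z U.powerset ↔ ζ \ U ∈ Z := by
  simp only [joinSC, mem_image, mem_product, Prod.exists, mem_powerset]
  constructor
  · rintro ⟨η, s, ⟨hη, hs⟩, rfl⟩
    rwa [union_sdiff_distrib, sdiff_eq_self_of_disjoint (hZU η hη),
      sdiff_eq_empty_iff_subset.mpr hs, union_empty]
  · exact fun h => ⟨ζ \ U, ζ ∩ U, ⟨h, inter_subset_right⟩, sdiff_union_inter ζ U⟩

theorem ElemCollapse.joinSC_powerset (h : ElemCollapse d Z Z') (hZU : ∀ η ∈ Z, Disjoint η U) :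
    ElemCollapse d (joinSC Z U.powerset) (joinSC Z' U.powerset) := by
  have hZ'U : ∀ η ∈ Z', Disjoint η U := fun η hη => hZU η (h.subset_s6 hη)
  obtain ⟨σ, τ, ⟨hσ, hτ, hστ, hmax⟩, hcard, rfl⟩ := h
  have hσU := hZU σ hσ
  have hσ_sub {η : Finset W} : σ ⊆ η \ U ↔ σ ⊆ η := by
    rw [subset_sdiff, and_iff_left hσU]
  refine ⟨σ, τ ∪ U, ⟨?_, ?_, subset_union_left.trans' hστ, ?_⟩, hcard, ?_⟩
  · rwa [mem_joinSC_powerset hZU, sdiff_eq_self_of_disjoint hσU]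
  · rwa [mem_joinSC_powerset hZU, union_sdiff_right, sdiff_eq_self_of_disjoint (hZU τ hτ)]
  · intro η hη hση
    rw [mem_joinSC_powerset hZU] at hη
    exact sdiff_le_iff'.mp (hmax _ hη (hσ_sub.mpr hση))
  · ext ζ
    rw [mem_joinSC_powerset hZ'U, mem_filter, mem_filter, mem_joinSC_powerset hZU, hσ_sub,
      sdiff_le_iff', sup_eq_union]

theorem Collapsible.joinSC_powerset (h : Collapsible d Z) (hZU : ∀ η ∈ Z, Disjoint η U) :
    Collapsible d (joinSC Z U.powerset) := by
  have := h.lift_of_invariant (fun Z => joinSC Z U.powerset)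
    (P := fun Z => ∀ η ∈ Z, Disjoint η U) (fun _ _ hab hU η hη => hU η (hab.subset_s6 hη))
    (fun _ _ hab hU => .single (hab.joinSC_powerset hU)) hZU
  simpa [Collapsible, PaperKL.joinSC] using this

theorem ElemCollapse.deleteSet (hZ : IsSimplicialComplex Z) (h : ElemCollapse d Z Z') :
    Relation.ReflTransGen (ElemCollapse d) (deleteSet Z U) (deleteSet Z' U) := by
  obtain ⟨σ, τ, ⟨hσ, hτ, hστ, hmax⟩, hcard, rfl⟩ := h
  simp only [PaperKL.deleteSet, ← disjoint_iff_inter_eq_empty]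
  by_cases hσU : Disjoint σ U
  · refine .single ⟨σ, τ \ U, ⟨?_, ?_, ?_, ?_⟩, hcard, ?_⟩
    · exact mem_filter.mpr ⟨hσ, hσU⟩
    · exact mem_filter.mpr ⟨hZ τ hτ _ sdiff_subset, sdiff_disjoint⟩
    · exact subset_sdiff.mpr ⟨hστ, hσU⟩
    · intro η hη hση
      rw [mem_filter] at hη
      exact subset_sdiff.mpr ⟨hmax η hη.1 hση, hη.2⟩
    · ext η
      simp only [mem_filter, subset_sdiff]
      tauto
  · convert Relation.ReflTransGen.refl using 1
    ext η
    simp only [mem_filter]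
    exact ⟨fun h => ⟨h.1.1, h.2⟩, fun h => ⟨⟨h.1, fun hη => hσU (h.2.mono_left hη.1)⟩, h.2⟩⟩

theorem Collapsible.deleteSet (h : Collapsible d Z) (hZ : IsSimplicialComplex Z) :
    Collapsible d (deleteSet Z U) := by
  have := h.lift_of_invariant (PaperKL.deleteSet · U) (P := IsSimplicialComplex)
    (fun _ _ hab ha => ha.of_elemCollapse hab) (fun _ _ hab ha => hab.deleteSet ha) hZ
  simpa [Collapsible, PaperKL.deleteSet] using this

theorem deleteSet_joinSC_powerset (hXU : ∀ η ∈ X, Disjoint η U) :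
    deleteSet (joinSC X U.powerset) U = X := by
  ext η
  rw [PaperKL.deleteSet, mem_filter, mem_joinSC_powerset hXU, ← disjoint_iff_inter_eq_empty]
  constructor
  · rintro ⟨h, hηU⟩
    rwa [sdiff_eq_self_of_disjoint hηU] at h
  · intro h
    rw [sdiff_eq_self_of_disjoint (hXU η h)]
    exact ⟨h, hXU η h⟩

end Collapses

/-- For disjoint finite sets `U` and `Vs` and a simplicial complex
`X` on vertex set `Vs`, one has `C(X ∗ 2^U) = C(X)`. -/
theorem collapseNum_join_powerset {W : Type*} [DecidableEq W]
    (U Vs : Finset W) (hUV : Disjoint U Vs)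
    (X : Finset (Finset W)) (hX : IsSimplicialComplex X) (hXV : vertexSet X ⊆ Vs) :
    collapseNum (joinSC X U.powerset) = collapseNum X := by
  have hXU : ∀ η ∈ X, Disjoint η U := fun η hη =>
    (hUV.mono_right ((le_sup (f := id) hη).trans hXV)).symm
  have hJ : IsSimplicialComplex (joinSC X U.powerset) :=
    hX.joinSC (isSimplicialComplex_powerset U)
  exact congrArg sInf <| Set.ext fun d =>
    ⟨fun h => deleteSet_joinSC_powerset hXU ▸ h.deleteSet hJ, fun h => h.joinSC_powerset hXU⟩

end PaperKL
end

section
/- Let G be a finite k-colorable graph and n ≥ 1 an integer. Then C(I_n(G)) ≤ k(n − 1). -/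
namespace PaperKL

open Finset

variable {V : Type*}

theorem isFreeFace_self_of_forall_card_le [DecidableEq V] {X : Finset (Finset V)}
    {τ : Finset V} (hτ : τ ∈ X) (hmax : ∀ η ∈ X, η.card ≤ τ.card) :
    IsFreeFace X τ τ :=
  ⟨hτ, hτ, subset_rfl, fun η hη hsub => (eq_of_subset_of_card_le hsub (hmax η hη)).ge⟩

/-- A face of maximum size is a free face of itself, so the faces can be collapsed away
one at a time, largest first. -/
theorem collapsible_of_forall_card_le [DecidableEq V] {d : ℕ} (X : Finset (Finset V))
    (h : ∀ σ ∈ X, σ.card ≤ d) : Collapsible d X := by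
  induction X using Finset.strongInduction with
  | _ X ih =>
    rcases X.eq_empty_or_nonempty with rfl | hne
    · exact Relation.ReflTransGen.refl
    obtain ⟨τ, hτ, hmax⟩ := X.exists_max_image Finset.card hne
    set Y := X.filter fun η => ¬(τ ⊆ η ∧ η ⊆ τ)
    have hstep : ElemCollapse d X Y :=
      ⟨τ, τ, isFreeFace_self_of_forall_card_le hτ hmax, h τ hτ, rfl⟩
    have hYX : Y ⊂ X :=
      (ssubset_iff_of_subset (filter_subset _ _)).mpr ⟨τ, hτ, by simp⟩
    exact .head hstep (ih Y hYX fun σ hσ => h σ (filter_subset _ _ hσ))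

theorem collapseNum_le_of_forall_card_le [DecidableEq V] {d : ℕ} {X : Finset (Finset V)}
    (h : ∀ σ ∈ X, σ.card ≤ d) : collapseNum X ≤ d :=
  Nat.sInf_le (collapsible_of_forall_card_le X h)

theorem isIndepSet_filter_coloring {α : Type*} [DecidableEq α] {G : SimpleGraph V}
    (c : G.Coloring α) (s : Finset V) (a : α) : IsIndepSet G (s.filter fun v => c v = a) := by
  intro u hu v hv hadj
  exact c.valid hadj ((mem_filter.mp hu).2.trans (mem_filter.mp hv).2.symm)

theorem card_le_mul_of_colorable {G : SimpleGraph V} {k n : ℕ} (hk : G.Colorable k)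
    {U : Finset V} (hU : ¬ ∃ I ⊆ U, I.card = n ∧ IsIndepSet G I) :
    U.card ≤ k * (n - 1) := by
  obtain ⟨c⟩ := hk
  have hclass : ∀ i : Fin k, (U.filter fun v => c v = i).card ≤ n - 1 := by
    intro i
    by_contra! hlt
    obtain ⟨I, hIU, hIcard⟩ :=
      exists_subset_card_eq (s := U.filter fun v => c v = i) (n := n) (by omega)
    exact hU ⟨I, hIU.trans (filter_subset _ _), hIcard,
      fun u hu v hv => isIndepSet_filter_coloring c U i u (hIU hu) v (hIU hv)⟩
  calc U.card = ∑ i : Fin k, (U.filter fun v => c v = i).card :=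
        card_eq_sum_card_fiberwise fun v _ => mem_univ (c v)
    _ ≤ ∑ _i : Fin k, (n - 1) := sum_le_sum fun i _ => hclass i
    _ = k * (n - 1) := by simp

theorem not_exists_indepSet_of_mem_indComplexOn [DecidableEq V] {G : SimpleGraph V}
    {W U : Finset V} {n : ℕ} (hU : U ∈ indComplexOn G W n) :
    ¬ ∃ I ⊆ U, I.card = n ∧ IsIndepSet G I := by
  unfold indComplexOn at hU
  exact (@mem_filter _ _ (Classical.decPred _) _ U).mp hU |>.2

theorem collapseNum_indComplex_le_of_colorable_general {V : Type*} [DecidableEq V] [Fintype V]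
    (G : SimpleGraph V) (k : ℕ) (hk : G.Colorable k) (n : ℕ) :
    collapseNum (indComplex G n) ≤ k * (n - 1) :=
  collapseNum_le_of_forall_card_le fun _ hU =>
    card_le_mul_of_colorable hk (not_exists_indepSet_of_mem_indComplexOn hU)

/-- If `G` is `k`-colorable then `C(I_n(G)) ≤ k (n - 1)`. -/
theorem collapseNum_indComplex_le_of_colorable {V : Type*} [DecidableEq V] [Fintype V]
    (G : SimpleGraph V) (k : ℕ) (hk : G.Colorable k) (n : ℕ) (hn : 1 ≤ n) :
    collapseNum (indComplex G n) ≤ k * (n - 1) :=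
  collapseNum_indComplex_le_of_colorable_general G k hk n

end PaperKL
end
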